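/- Let α₀(k) := 4π²|k|² + 1 for k ∈ ℤ³, where |k| is the Euclidean norm. Then the family ((k₁,k₂) ↦ 1/(α₀(k₁)·α₀(k₂)·α₀(k₁+k₂)·(α₀(k₁)+α₀(k₂)+α₀(k₁+k₂)))) indexed by (k₁,k₂) ∈ ℤ³ × ℤ³ is summable; in particular the sum Σ_{k₁,k₂∈ℤ³} 1/(α₀(k₁)·α₀(k₂)·α₀(k₁+k₂)·(α₀(k₁)+α₀(k₂)+α₀(k₁+k₂))) is finite. -/

import Mathlib

open Real

noncomputable section

/-- The lattice `ℤ³`. -/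
abbrev Z3 := Fin 3 → ℤ

/-- Euclidean norm `|k|` of `k ∈ ℤ³`. -/
def knorm (k : Z3) : ℝ := Real.sqrt (∑ i, ((k i : ℝ)) ^ 2)

/-- `α₀(k) = 4π²|k|² + 1`. -/
def alpha0 (k : Z3) : ℝ := 4 * π ^ 2 * (knorm k) ^ 2 + 1

lemma knorm_sq (k : Z3) : (knorm k) ^ 2 = ∑ i, ((k i : ℝ)) ^ 2 := by
  rw [knorm, sq_sqrt]
  positivity

lemma one_add_sum_le_alpha0 (k : Z3) : 1 + ∑ i, ((k i : ℝ)) ^ 2 ≤ alpha0 k := by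
  rw [alpha0, knorm_sq]
  have hS : (0:ℝ) ≤ ∑ i, ((k i : ℝ)) ^ 2 := by positivity
  have h4 : (1:ℝ) ≤ 4 * π ^ 2 := by nlinarith [Real.pi_gt_three]
  nlinarith [mul_le_mul_of_nonneg_right h4 hS]

lemma one_le_alpha0 (k : Z3) : 1 ≤ alpha0 k := by
  have := one_add_sum_le_alpha0 k
  have hS : (0:ℝ) ≤ ∑ i, ((k i : ℝ)) ^ 2 := by positivity
  linarith

/-- 1-d summability. -/
lemma summable_oneD : Summable (fun n : ℤ => ((1:ℝ) + (n:ℝ) ^ 2) ^ (-(2/3) : ℝ)) := by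
  have key : Summable (fun n : ℕ => ((1:ℝ) + (n:ℝ) ^ 2) ^ (-(2/3) : ℝ)) := by
    have hsum : Summable (fun n : ℕ => (n : ℝ) ^ (-(4/3) : ℝ)) :=
      Real.summable_nat_rpow.mpr (by norm_num)
    apply hsum.of_norm_bounded_eventually_nat
    filter_upwards [Filter.eventually_gt_atTop 0] with n hn
    have hn' : (0:ℝ) < (n:ℝ) := by exact_mod_cast hn
    have h1 : ((n:ℝ) ^ 2) ^ (-(2/3) : ℝ) = (n:ℝ) ^ (-(4/3) : ℝ) := by
      rw [← Real.rpow_natCast (n:ℝ) 2, ← Real.rpow_mul hn'.le]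
      norm_num
    rw [Real.norm_of_nonneg (by positivity)]
    calc ((1:ℝ) + (n:ℝ) ^ 2) ^ (-(2/3) : ℝ)
        ≤ ((n:ℝ) ^ 2) ^ (-(2/3) : ℝ) :=
          Real.rpow_le_rpow_of_nonpos (by positivity) (by nlinarith) (by norm_num)
      _ = (n:ℝ) ^ (-(4/3) : ℝ) := h1
  apply Summable.of_nat_of_neg (by simpa using key)
  simpa using key

/-- Product over coordinates of a nonneg summable function is summable over `Fin n → ℤ`. -/
lemma summable_pi_prod (f : ℤ → ℝ) (hf0 : ∀ x, 0 ≤ f x) (hf : Summable f) :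
    ∀ n : ℕ, Summable (fun k : Fin n → ℤ => ∏ i, f (k i)) := by
  intro n
  induction n with
  | zero =>
    have h : (fun k : Fin 0 → ℤ => ∏ i, f (k i)) = fun _ => 1 := by funext k; simp
    rw [h]
    exact summable_of_finite_support
      (Set.Finite.subset (Set.finite_univ (α := Fin 0 → ℤ)) (by simp))
  | succ m ih =>
    have h2 : Summable (fun p : ℤ × (Fin m → ℤ) => f p.1 * ∏ i, f (p.2 i)) :=
      Summable.mul_of_nonneg (f := f) (g := fun k : Fin m → ℤ => ∏ i, f (k i))
        hf ih (fun x => hf0 x) (fun k => Finset.prod_nonneg fun i _ => hf0 _)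
    have h3 := ((Fin.consEquiv (fun _ : Fin (m + 1) => ℤ)).symm.summable_iff
      (f := fun p : ℤ × (Fin m → ℤ) => f p.1 * ∏ i, f (p.2 i))).2 h2
    apply h3.congr
    intro k
    show f (k 0) * ∏ i : Fin m, f (k i.succ) = ∏ i, f (k i)
    rw [Fin.prod_univ_succ]

/-- Summability of `1/α₀(k)²` over `ℤ³`. -/
lemma summable_inv_alpha0_sq : Summable (fun k : Z3 => 1 / (alpha0 k) ^ 2) := by
  have hbdd : ∀ k : Z3, 1 / (alpha0 k) ^ 2 ≤ ∏ i, ((1:ℝ) + ((k i : ℝ)) ^ 2) ^ (-(2/3) : ℝ) := by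
    intro k
    set S : ℝ := ∑ i, ((k i : ℝ)) ^ 2 with hS
    have hS0 : (0:ℝ) ≤ S := by positivity
    have hα : 1 + S ≤ alpha0 k := one_add_sum_le_alpha0 k
    have hprod_le : (∏ i, ((1:ℝ) + ((k i : ℝ)) ^ 2)) ≤ (1 + S) ^ 3 := by
      calc (∏ i, ((1:ℝ) + ((k i : ℝ)) ^ 2)) ≤ ∏ _i : Fin 3, (1 + S) := by
            apply Finset.prod_le_prod (fun i _ => by positivity)
            intro i _
            have : ((k i : ℝ)) ^ 2 ≤ S := by
              apply Finset.single_le_sum (f := fun j => ((k j : ℝ)) ^ 2)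
                (fun j _ => by positivity) (Finset.mem_univ i)
            linarith
        _ = (1 + S) ^ 3 := by rw [Finset.prod_const]; norm_num
    have hrw : (∏ i, ((1:ℝ) + ((k i : ℝ)) ^ 2) ^ (-(2/3) : ℝ)) =
        (∏ i, ((1:ℝ) + ((k i : ℝ)) ^ 2)) ^ (-(2/3) : ℝ) := by
      rw [← Real.finset_prod_rpow _ _ (fun i _ => by positivity)]
    rw [hrw]
    have hP : (0:ℝ) < ∏ i, ((1:ℝ) + ((k i : ℝ)) ^ 2) := by positivity
    calc (1:ℝ) / (alpha0 k) ^ 2 ≤ 1 / (1 + S) ^ 2 := by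
          apply one_div_le_one_div_of_le (by positivity)
          have h1 : (0:ℝ) < 1 + S := by linarith
          nlinarith
      _ = ((1 + S) ^ 3) ^ (-(2/3) : ℝ) := by
          rw [← Real.rpow_natCast (1 + S) 3, ← Real.rpow_mul (by linarith)]
          norm_num
      _ ≤ (∏ i, ((1:ℝ) + ((k i : ℝ)) ^ 2)) ^ (-(2/3) : ℝ) :=
          Real.rpow_le_rpow_of_nonpos hP hprod_le (by norm_num)
  have hsum : Summable (fun k : Z3 => ∏ i, ((1:ℝ) + ((k i : ℝ)) ^ 2) ^ (-(2/3) : ℝ)) := by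
    have := summable_pi_prod (fun n : ℤ => ((1:ℝ) + (n:ℝ) ^ 2) ^ (-(2/3) : ℝ))
      (fun x => by positivity) summable_oneD 3
    exact this
  exact hsum.of_nonneg_of_le (fun k => by positivity) hbdd

lemma key_ineq {a b c : ℝ} (ha : 1 ≤ a) (hb : 1 ≤ b) (hc : 1 ≤ c) :
    1 / (a * b * c * (a + b + c)) ≤ (1/2) * (1 / a ^ 2 * (1 / b ^ 2) + 1 / a ^ 2 * (1 / c ^ 2)) := by
  have ha0 : (0:ℝ) < a := by linarith
  have hb0 : (0:ℝ) < b := by linarith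
  have hc0 : (0:ℝ) < c := by linarith
  have hbc : 1 / (b * c) ≤ (1/2) * (1 / b ^ 2 + 1 / c ^ 2) := by
    have h := sq_nonneg (1/b - 1/c)
    have e : (1/b - 1/c) ^ 2 = 1 / b ^ 2 + 1 / c ^ 2 - 2 * (1 / (b * c)) := by
      field_simp
      ring
    rw [e] at h
    linarith
  calc 1 / (a * b * c * (a + b + c)) ≤ 1 / (a ^ 2 * (b * c)) := by
        apply one_div_le_one_div_of_le (by positivity)
        nlinarith [mul_pos (mul_pos ha0 hb0) hc0]
    _ = 1 / a ^ 2 * (1 / (b * c)) := by rw [one_div_mul_one_div]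
    _ ≤ 1 / a ^ 2 * ((1/2) * (1 / b ^ 2 + 1 / c ^ 2)) :=
        mul_le_mul_of_nonneg_left hbc (by positivity)
    _ = (1/2) * (1 / a ^ 2 * (1 / b ^ 2) + 1 / a ^ 2 * (1 / c ^ 2)) := by ring

/-- Summability of the limiting renormalization sum for the differential stochastic object. -/
theorem renormalization_sum_summable :
    Summable (fun p : Z3 × Z3 =>
      1 / (alpha0 p.1 * alpha0 p.2 * alpha0 (p.1 + p.2) *
        (alpha0 p.1 + alpha0 p.2 + alpha0 (p.1 + p.2)))) := by
  set f : Z3 → ℝ := fun k => 1 / (alpha0 k) ^ 2 with hf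
  have hf0 : ∀ k, 0 ≤ f k := fun k => by
    have := one_le_alpha0 k; positivity
  have hfs : Summable f := summable_inv_alpha0_sq
  have hF : Summable (fun p : Z3 × Z3 => f p.1 * f p.2) :=
    hfs.mul_of_nonneg hfs hf0 hf0
  have hG : Summable (fun p : Z3 × Z3 => f p.1 * f (p.1 + p.2)) := by
    have := ((Equiv.mk (fun p : Z3 × Z3 => ((p.1, p.1 + p.2) : Z3 × Z3))
        (fun p => (p.1, p.2 - p.1)) (fun p => by simp) (fun p => by simp)).summable_iff
        (f := fun p : Z3 × Z3 => f p.1 * f p.2)).2 hF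
    simpa [Function.comp_def] using this
  have hsum : Summable (fun p : Z3 × Z3 =>
      (1/2) * (f p.1 * f p.2 + f p.1 * f (p.1 + p.2))) :=
    (hF.add hG).mul_left _
  apply hsum.of_nonneg_of_le
  · intro p
    have h1 := one_le_alpha0 p.1
    have h2 := one_le_alpha0 p.2
    have h3 := one_le_alpha0 (p.1 + p.2)
    positivity
  · intro p
    have h1 := one_le_alpha0 p.1
    have h2 := one_le_alpha0 p.2
    have h3 := one_le_alpha0 (p.1 + p.2)
    simpa [hf] using key_ineq h1 h2 h3
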